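/- If each ReLU constraint in a feedforward network is replaced by its exact big-M encoding (with valid layer-wise bounds M⁻_s < 0 < M⁺_s satisfying M⁻_s ≤ W^s X^{s-1} + b^s ≤ M⁺_s componentwise for all feasible inputs), then for any fixed input X^0 in the bounded input domain, the set of feasible (X^1, …, X^S) in the MILP encoding with all pre-activations nonzero is a singleton equal to the network's forward pass. -/
import Mathlib


open Matrix

/-- Componentwise ReLU. -/
def reluVec {k : ℕ} (x : Fin k → ℝ) : Fin k → ℝ := fun i => max (x i) 0

/-- Forward pass of a feedforward network with `S` layers of weights:
ReLU activations on hidden layers (`s + 1 < S`) and identity activation on the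
output layer (`s + 1 = S`). -/
def forwardPass (S : ℕ) (n : ℕ → ℕ)
    (W : ∀ s : ℕ, Matrix (Fin (n (s + 1))) (Fin (n s)) ℝ)
    (b : ∀ s : ℕ, Fin (n (s + 1)) → ℝ) (X0 : Fin (n 0) → ℝ) :
    (s : ℕ) → Fin (n s) → ℝ
  | 0 => X0
  | s + 1 =>
    if s + 1 < S then reluVec (W s *ᵥ forwardPass S n W b X0 s + b s)
    else W s *ᵥ forwardPass S n W b X0 s + b s

/-- Feasibility of `(X^0, …, X^S)` in the big-M MILP encoding of the network:
each hidden unit `Y = max(ω, 0)` is encoded via binaries `Z` and the constraints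
`Y ≥ ω`, `Y ≤ ω − M⁻(1−Z)`, `Y ≤ M⁺ Z`, `Y ≥ 0`, and the output layer is affine. -/
def MILPFeasible (S : ℕ) (n : ℕ → ℕ)
    (W : ∀ s : ℕ, Matrix (Fin (n (s + 1))) (Fin (n s)) ℝ)
    (b : ∀ s : ℕ, Fin (n (s + 1)) → ℝ)
    (Mneg Mpos : ∀ s : ℕ, Fin (n (s + 1)) → ℝ)
    (X0 : Fin (n 0) → ℝ) (X : ∀ s : ℕ, Fin (n s) → ℝ) : Prop :=
  X 0 = X0 ∧
  (∀ s : ℕ, s + 1 < S → ∃ Z : Fin (n (s + 1)) → ℝ, ∀ i,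
    (Z i = 0 ∨ Z i = 1) ∧
    (W s *ᵥ X s + b s) i ≤ X (s + 1) i ∧
    X (s + 1) i ≤ (W s *ᵥ X s + b s) i - Mneg s i * (1 - Z i) ∧
    X (s + 1) i ≤ Mpos s i * Z i ∧
    0 ≤ X (s + 1) i) ∧
  (∀ s : ℕ, s + 1 = S → X (s + 1) = W s *ᵥ X s + b s)

/-- Correctness of the big-M MILP encoding of a ReLU network: with valid layer-wise
bounds `M⁻ < 0 < M⁺` satisfied by the pre-activations of every feasible point, and
all pre-activations of the forward pass at the given input nonzero, the forward pass
is feasible and is the unique feasible point. -/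
theorem milp_relu_network_exact (S : ℕ) (hS : 1 ≤ S) (n : ℕ → ℕ)
    (W : ∀ s : ℕ, Matrix (Fin (n (s + 1))) (Fin (n s)) ℝ)
    (b : ∀ s : ℕ, Fin (n (s + 1)) → ℝ)
    (Mneg Mpos : ∀ s : ℕ, Fin (n (s + 1)) → ℝ)
    (hMneg : ∀ s i, Mneg s i < 0) (hMpos : ∀ s i, 0 < Mpos s i)
    (X0 : Fin (n 0) → ℝ)
    (hbounds : ∀ X : ∀ s : ℕ, Fin (n s) → ℝ,
      (MILPFeasible S n W b Mneg Mpos X0 X ∨ X = forwardPass S n W b X0) →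
      ∀ s : ℕ, s + 1 < S → ∀ i,
        Mneg s i ≤ (W s *ᵥ X s + b s) i ∧ (W s *ᵥ X s + b s) i ≤ Mpos s i)
    (hnonzero : ∀ s : ℕ, s + 1 < S → ∀ i,
      (W s *ᵥ forwardPass S n W b X0 s + b s) i ≠ 0) :
    MILPFeasible S n W b Mneg Mpos X0 (forwardPass S n W b X0) ∧
    (∀ X : ∀ s : ℕ, Fin (n s) → ℝ, MILPFeasible S n W b Mneg Mpos X0 X →
      ∀ s : ℕ, s ≤ S → X s = forwardPass S n W b X0 s) := by

  set F := forwardPass S n W b X0 with hF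
  constructor
  · refine ⟨rfl, ?_, ?_⟩
    · intro s hs
      refine ⟨fun i => if 0 < (W s *ᵥ F s + b s) i then 1 else 0, fun i => ?_⟩
      have hb := hbounds F (Or.inr rfl) s hs i
      have hFs1 : F (s + 1) i = max ((W s *ᵥ F s + b s) i) 0 := by
        simp [hF, forwardPass, hs, reluVec]
      by_cases h : 0 < (W s *ᵥ F s + b s) i
      · simp only [if_pos h]
        have hmax : F (s + 1) i = (W s *ᵥ F s + b s) i := by
          rw [hFs1, max_eq_left h.le]
        refine ⟨Or.inr trivial, le_of_eq hmax.symm, ?_, ?_, ?_⟩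
        · rw [hmax]; simp
        · rw [hmax, mul_one]; exact hb.2
        · rw [hFs1]; exact le_max_right _ _
      · simp only [if_neg h]
        have hle : (W s *ᵥ F s + b s) i ≤ 0 := not_lt.mp h
        have hmax : F (s + 1) i = 0 := by rw [hFs1, max_eq_right hle]
        refine ⟨Or.inl trivial, ?_, ?_, ?_, ?_⟩
        · rw [hmax]; exact hle
        · rw [hmax]; nlinarith [hb.1]
        · rw [hmax, mul_zero]
        · rw [hmax]
    · intro s hs
      have h : ¬ (s + 1 < S) := by omega
      simp [hF, forwardPass, h]
  · intro X hX s
    induction s with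
    | zero =>
      intro _
      simpa [hF, forwardPass] using hX.1
    | succ s ih =>
      intro hsS
      have hXs : X s = F s := ih (by omega)
      by_cases h : s + 1 < S
      · obtain ⟨Z, hZ⟩ := hX.2.1 s h
        funext i
        obtain ⟨hZ01, h1, h2, h3, h4⟩ := hZ i
        have hFs1 : F (s + 1) i = max ((W s *ᵥ F s + b s) i) 0 := by
          simp [hF, forwardPass, h, reluVec]
        rw [hXs] at h1 h2
        rcases hZ01 with hz | hz
        · have hx0 : X (s + 1) i = 0 := le_antisymm (by simpa [hz] using h3) h4
          have hw : (W s *ᵥ F s + b s) i ≤ 0 := hx0 ▸ h1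
          rw [hFs1, hx0, max_eq_right hw]
        · have hxw : X (s + 1) i = (W s *ᵥ F s + b s) i :=
            le_antisymm (by simpa [hz] using h2) h1
          rw [hFs1, hxw, max_eq_left (hxw ▸ h4)]
      · have hsE : s + 1 = S := by omega
        have heq := hX.2.2 s hsE
        rw [hXs] at heq
        rw [heq]
        simp [hF, forwardPass, h]
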